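/- arXiv:1510.00531 — 4 statements merged into one kernel-verified Lean document; each statement's English description precedes it below -/
import Mathlib

section
/- Fix an integer d ≥ 2 and reals b > 0 and ν < 0. For a > 0 set A = a b^d/d, Z_a = Σ_{k∈ℕ₀^d} (A^{k₁+⋯+k_d}/(k₁!⋯k_d!))·exp(ν·k₁⋯k_d) (a convergent series), and π_a(k) = (A^{k₁+⋯+k_d}/(k₁!⋯k_d!))·exp(ν·k₁⋯k_d)/Z_a for k ∈ ℕ₀^d. Then the series Σ_{k∈ℕ₀^d} (k₁⋯k_d)·π_a(k) converges for every a > 0 and lim_{a→∞} Σ_{k∈ℕ₀^d} (k₁⋯k_d)·π_a(k) = 0. -/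
/-!
Write `A = a b^d / d` and `P(k) = k₁⋯k_d`. The partition function is at least `e^A`: the terms
on a coordinate axis have `P = 0` and sum to `e^A`. For the numerator,
`P e^{νP} ≤ (2/|ν|) e^{νP/2}`, and if all `kᵢ ≥ 1` and `k_j` is the largest coordinate then
`P ≥ k_j` and `P ≥ kᵢ²` for `i ≠ j`, so `d P ≥ k_j + Σ_{i ≠ j} kᵢ²`. With `κ = |ν|/(2d)` the
numerator is thus dominated by a sum over `j` of product series. The `j`-th factor sums to
`exp (e^{-κ} A)`, and each other factor is at most `exp (1 + (log A)²/(4κ))` because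
`n log A - κ n² ≤ (log A)²/(4κ)`. As `e^{-κ} < 1` and `(log A)² = o(A)`, the numerator is
`o(e^A)`.
-/

open Filter

section

open Real Finset
open scoped Nat

theorem Real.hasSum_pow_div_factorial (x : ℝ) : HasSum (fun n : ℕ => x ^ n / n !) (exp x) := by
  rw [exp_eq_exp_ℝ]
  exact NormedSpace.expSeries_div_hasSum_exp x

section ProdApply

variable {ι β : Type*} [Fintype ι] {g : ι → β → ℝ}

theorem sum_prod_apply_le_prod_tsum (h0 : ∀ i n, 0 ≤ g i n) (hs : ∀ i, Summable (g i))
    (s : Finset (ι → β)) : ∑ k ∈ s, ∏ i, g i (k i) ≤ ∏ i, ∑' n, g i n := by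
  classical
  calc ∑ k ∈ s, ∏ i, g i (k i)
      ≤ ∑ k ∈ Fintype.piFinset fun i => s.image (· i), ∏ i, g i (k i) :=
        sum_le_sum_of_subset_of_nonneg
          (fun k hk => Fintype.mem_piFinset.2 fun i => mem_image_of_mem _ hk)
          (fun _ _ _ => prod_nonneg fun _ _ => h0 _ _)
    _ = ∏ i, ∑ n ∈ s.image (· i), g i n := (prod_univ_sum _ _).symm
    _ ≤ ∏ i, ∑' n, g i n :=
        prod_le_prod (fun _ _ => sum_nonneg fun _ _ => h0 _ _)
          fun i _ => (hs i).sum_le_tsum _ fun _ _ => h0 _ _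

theorem summable_prod_apply_of_nonneg (h0 : ∀ i n, 0 ≤ g i n) (hs : ∀ i, Summable (g i)) :
    Summable fun k : ι → β => ∏ i, g i (k i) :=
  summable_of_sum_le (fun _ => prod_nonneg fun _ _ => h0 _ _) (sum_prod_apply_le_prod_tsum h0 hs)

theorem tsum_prod_apply_le_prod_tsum (h0 : ∀ i n, 0 ≤ g i n) (hs : ∀ i, Summable (g i)) :
    ∑' k : ι → β, ∏ i, g i (k i) ≤ ∏ i, ∑' n, g i n :=
  Real.tsum_le_of_sum_le (fun _ => prod_nonneg fun _ _ => h0 _ _)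
    (sum_prod_apply_le_prod_tsum h0 hs)

end ProdApply

theorem tendsto_exp_mul_mul_exp_log_sq_pow_div_exp {c : ℝ} (hc : c < 1) (K K' : ℝ) (n : ℕ) :
    Tendsto (fun A => exp (c * A) * exp (K + K' * log A ^ 2) ^ n / exp A) atTop (nhds 0) := by
  have hratio : Tendsto (fun A => (c - 1) + (n * K * A⁻¹ + n * K' * (log A ^ 2 / A)))
      atTop (nhds (c - 1)) := by
    have h1 := (tendsto_inv_atTop_zero (𝕜 := ℝ)).const_mul (n * K)
    have h2 := (tendsto_pow_log_div_mul_add_atTop 1 0 2 one_ne_zero).const_mul (n * K')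
    simpa using (h1.add h2).const_add (c - 1)
  have hexponent : Tendsto (fun A => (c - 1) * A + n * (K + K' * log A ^ 2)) atTop atBot := by
    refine (tendsto_id.atTop_mul_neg (by linarith) hratio).congr' ?_
    filter_upwards [eventually_gt_atTop 0] with A hA
    simp only [id]
    field_simp
  refine (tendsto_exp_atBot.comp hexponent).congr fun A => ?_
  simp only [Function.comp_apply, ← exp_nat_mul, ← exp_add, ← exp_sub]
  ring_nf

section Gibbs

variable {ι : Type*}

section Weight

variable [Fintype ι]

noncomputable def gibbsWeight (ν A : ℝ) (k : ι → ℕ) : ℝ :=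
  A ^ (∑ i, k i) / (∏ i, ((k i)! : ℝ)) * exp (ν * ∏ i, (k i : ℝ))

theorem gibbsWeight_nonneg {ν A : ℝ} (hA : 0 ≤ A) (k : ι → ℕ) : 0 ≤ gibbsWeight ν A k := by
  unfold gibbsWeight
  positivity

theorem pow_sum_div_prod_factorial (A : ℝ) (k : ι → ℕ) :
    A ^ (∑ i, k i) / ∏ i, ((k i)! : ℝ) = ∏ i, A ^ k i / (k i)! := by
  rw [prod_div_distrib, prod_pow_eq_pow_sum]

theorem summable_gibbsWeight {ν A : ℝ} (hν : ν ≤ 0) (hA : 0 ≤ A) :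
    Summable (gibbsWeight (ι := ι) ν A) := by
  refine (summable_prod_apply_of_nonneg (fun _ n => by positivity)
    fun _ => Real.summable_pow_div_factorial A).of_nonneg_of_le (gibbsWeight_nonneg hA) fun k => ?_
  rw [gibbsWeight, ← pow_sum_div_prod_factorial]
  refine mul_le_of_le_one_right (by positivity) (exp_le_one_iff.2 ?_)
  exact mul_nonpos_of_nonpos_of_nonneg hν (by positivity)

theorem gibbsWeight_single [DecidableEq ι] [Nontrivial ι] (ν A : ℝ) (i : ι) (n : ℕ) :
    gibbsWeight ν A (Pi.single i n) = A ^ n / n ! := by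
  obtain ⟨l, hl⟩ := exists_ne i
  have hprod : ∏ i', ((Pi.single (M := fun _ => ℕ) i n i' : ℕ) : ℝ) = 0 :=
    prod_eq_zero (mem_univ l) (by simp [hl])
  have hfact : ∏ i', ((Pi.single (M := fun _ => ℕ) i n i')! : ℝ) = n ! :=
    (prod_eq_single i (fun l _ hl => by simp [hl]) (by simp)).trans (by simp)
  simp [gibbsWeight, hprod, hfact]

theorem exp_le_tsum_gibbsWeight [Nontrivial ι] {ν A : ℝ} (hν : ν ≤ 0) (hA : 0 ≤ A) :
    exp A ≤ ∑' k, gibbsWeight (ι := ι) ν A k := by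
  classical
  obtain ⟨i⟩ : Nonempty ι := inferInstance
  rw [← (Real.hasSum_pow_div_factorial A).tsum_eq]
  have hsingle (n : ℕ) : A ^ n / n ! ≤ gibbsWeight ν A (Pi.single i n) :=
    (gibbsWeight_single ν A i n).ge
  exact (Real.summable_pow_div_factorial A).tsum_le_tsum_of_inj _ (Pi.single_injective i)
    (fun k _ => gibbsWeight_nonneg hA k) hsingle (summable_gibbsWeight hν hA)

end Weight

section Majorant

variable [DecidableEq ι]

def penalty (j i : ι) (n : ℕ) : ℕ := if i = j then n else n ^ 2

noncomputable def gibbsMajorant (κ A : ℝ) (j i : ι) (n : ℕ) : ℝ :=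
  A ^ n / n ! * exp (-(κ * penalty j i n))

@[simp]
theorem penalty_self (j : ι) (n : ℕ) : penalty j j n = n := if_pos rfl

theorem penalty_of_ne {j i : ι} (hij : i ≠ j) (n : ℕ) : penalty j i n = n ^ 2 := if_neg hij

theorem gibbsMajorant_nonneg {κ A : ℝ} (hA : 0 ≤ A) (j i : ι) (n : ℕ) :
    0 ≤ gibbsMajorant κ A j i n := by
  unfold gibbsMajorant
  positivity

theorem summable_gibbsMajorant {κ A : ℝ} (hκ : 0 ≤ κ) (hA : 0 ≤ A) (j i : ι) :
    Summable (gibbsMajorant κ A j i) := by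
  refine (Real.summable_pow_div_factorial A).of_nonneg_of_le (gibbsMajorant_nonneg hA j i)
    fun n => mul_le_of_le_one_right (by positivity) (exp_le_one_iff.2 ?_)
  exact neg_nonpos.2 (by positivity)

theorem hasSum_gibbsMajorant_self (κ A : ℝ) (j : ι) :
    HasSum (gibbsMajorant κ A j j) (exp (exp (-κ) * A)) := by
  convert Real.hasSum_pow_div_factorial (exp (-κ) * A) using 2 with n
  simp only [gibbsMajorant, penalty_self, mul_pow, ← exp_nat_mul]
  ring_nf

theorem tsum_gibbsMajorant_le_of_ne {κ A : ℝ} (hκ : 0 < κ) (hA : 0 < A) {j i : ι} (hij : i ≠ j) :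
    ∑' n, gibbsMajorant κ A j i n ≤ exp (1 + (4 * κ)⁻¹ * log A ^ 2) := by
  have hterm (n : ℕ) :
      gibbsMajorant κ A j i n ≤ exp ((4 * κ)⁻¹ * log A ^ 2) * (1 ^ n / n !) := by
    have hquad : n * log A - κ * n ^ 2 ≤ (4 * κ)⁻¹ * log A ^ 2 := by
      rw [← div_eq_inv_mul, le_div_iff₀ (by positivity)]
      nlinarith [sq_nonneg (log A - 2 * κ * n)]
    calc gibbsMajorant κ A j i n = exp (n * log A - κ * n ^ 2) / n ! := by
          rw [gibbsMajorant, penalty_of_ne hij, exp_sub, exp_nat_mul, exp_log hA, exp_neg]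
          push_cast
          ring
      _ ≤ exp ((4 * κ)⁻¹ * log A ^ 2) * (1 ^ n / n !) := by
          rw [one_pow, mul_one_div]
          gcongr
  calc ∑' n, gibbsMajorant κ A j i n
      ≤ ∑' n : ℕ, exp ((4 * κ)⁻¹ * log A ^ 2) * (1 ^ n / n !) :=
        (summable_gibbsMajorant hκ.le hA.le j i).tsum_le_tsum hterm
          ((Real.summable_pow_div_factorial 1).mul_left _)
    _ = exp (1 + (4 * κ)⁻¹ * log A ^ 2) := by
        rw [tsum_mul_left, (Real.hasSum_pow_div_factorial 1).tsum_eq, ← exp_add, add_comm]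

variable [Fintype ι]

theorem sum_penalty_le_card_mul_prod {k : ι → ℕ} (hk : ∀ i, k i ≠ 0) {j : ι}
    (hj : ∀ i, k i ≤ k j) : ∑ i, penalty j i (k i) ≤ Fintype.card ι * ∏ i, k i := by
  have hP : 0 < ∏ i, k i := Nat.pos_of_ne_zero (prod_ne_zero_iff.2 fun i _ => hk i)
  calc ∑ i, penalty j i (k i) ≤ ∑ _i : ι, ∏ i, k i := sum_le_sum fun i _ => ?_
    _ = Fintype.card ι * ∏ i, k i := by rw [sum_const, card_univ, smul_eq_mul]
  unfold penalty
  split_ifs with hij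
  · exact Nat.le_of_dvd hP (dvd_prod_of_mem _ (mem_univ i))
  · calc k i ^ 2 ≤ k i * k j := by rw [sq]; exact Nat.mul_le_mul_left _ (hj i)
      _ = ∏ l ∈ {i, j}, k l := (prod_pair hij).symm
      _ ≤ ∏ l, k l := Nat.le_of_dvd hP (prod_dvd_prod_of_subset _ _ _ (subset_univ _))

theorem prod_gibbsMajorant (κ A : ℝ) (j : ι) (k : ι → ℕ) :
    ∏ i, gibbsMajorant κ A j i (k i)
      = A ^ (∑ i, k i) / (∏ i, ((k i)! : ℝ)) * exp (-(κ * ∑ i, (penalty j i (k i) : ℝ))) := by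
  simp only [gibbsMajorant, prod_mul_distrib, pow_sum_div_prod_factorial, mul_sum,
    ← sum_neg_distrib, exp_sum]

theorem mul_exp_le_div_mul_exp_half {ν : ℝ} (hν : ν < 0) {x : ℝ} :
    x * exp (ν * x) ≤ 2 / -ν * exp (ν / 2 * x) := by
  have hlin : -ν / 2 * x * exp (ν / 2 * x) ≤ 1 :=
    calc -ν / 2 * x * exp (ν / 2 * x) ≤ exp (-ν / 2 * x) * exp (ν / 2 * x) := by
          gcongr
          linarith [add_one_le_exp (-ν / 2 * x)]
      _ = 1 := by rw [← exp_add]; ring_nf; exact exp_zero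
  have hhalf : x * exp (ν / 2 * x) ≤ 2 / -ν := by
    rw [le_div_iff₀ (by linarith)]
    linarith
  calc x * exp (ν * x) = x * exp (ν / 2 * x) * exp (ν / 2 * x) := by
        rw [mul_assoc, ← exp_add]; ring_nf
    _ ≤ 2 / -ν * exp (ν / 2 * x) := mul_le_mul_of_nonneg_right hhalf (exp_pos _).le

theorem prod_mul_gibbsWeight_le [Nonempty ι] {ν κ A : ℝ} (hν : ν < 0) (hκ : 0 ≤ κ)
    (hκν : 2 * Fintype.card ι * κ ≤ -ν) (hA : 0 ≤ A) (k : ι → ℕ) :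
    (∏ i, (k i : ℝ)) * gibbsWeight ν A k ≤ 2 / -ν * ∑ j, ∏ i, gibbsMajorant κ A j i (k i) := by
  have hc : 0 ≤ 2 / -ν := div_nonneg zero_le_two (by linarith)
  have hterm (j : ι) : 0 ≤ ∏ i, gibbsMajorant κ A j i (k i) :=
    prod_nonneg fun _ _ => gibbsMajorant_nonneg hA _ _ _
  by_cases hzero : ∃ i, k i = 0
  · obtain ⟨i, hi⟩ := hzero
    rw [prod_eq_zero (mem_univ i) (by simp [hi]), zero_mul]
    exact mul_nonneg hc (sum_nonneg fun j _ => hterm j)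
  push Not at hzero
  obtain ⟨j, -, hj⟩ := exists_max_image univ k univ_nonempty
  have h : ∑ i, (penalty j i (k i) : ℝ) ≤ Fintype.card ι * ∏ i, (k i : ℝ) := by
    exact_mod_cast sum_penalty_le_card_mul_prod hzero fun i => hj i (mem_univ i)
  set P : ℝ := ∏ i, (k i : ℝ)
  have hpenalty : ν / 2 * P ≤ -(κ * ∑ i, (penalty j i (k i) : ℝ)) := by
    have hP : 0 ≤ P := by positivity
    nlinarith [mul_le_mul_of_nonneg_left h hκ, mul_le_mul_of_nonneg_right hκν hP]
  calc P * gibbsWeight ν A k = A ^ (∑ i, k i) / (∏ i, ((k i)! : ℝ)) * (P * exp (ν * P)) := by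
        unfold gibbsWeight; ring
    _ ≤ A ^ (∑ i, k i) / (∏ i, ((k i)! : ℝ)) *
          (2 / -ν * exp (-(κ * ∑ i, (penalty j i (k i) : ℝ)))) := by
        refine mul_le_mul_of_nonneg_left ?_ (by positivity)
        exact (mul_exp_le_div_mul_exp_half hν).trans
          (mul_le_mul_of_nonneg_left (exp_le_exp.2 hpenalty) hc)
    _ = 2 / -ν * ∏ i, gibbsMajorant κ A j i (k i) := by rw [prod_gibbsMajorant]; ring
    _ ≤ 2 / -ν * ∑ j, ∏ i, gibbsMajorant κ A j i (k i) :=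
        mul_le_mul_of_nonneg_left (single_le_sum (fun j _ => hterm j) (mem_univ j)) hc

theorem prod_tsum_gibbsMajorant_le {κ A : ℝ} (hκ : 0 < κ) (hA : 0 < A) (j : ι) :
    ∏ i, ∑' n, gibbsMajorant κ A j i n
      ≤ exp (exp (-κ) * A) * exp (1 + (4 * κ)⁻¹ * log A ^ 2) ^ (Fintype.card ι - 1) := by
  rw [← mul_prod_erase univ _ (mem_univ j), (hasSum_gibbsMajorant_self κ A j).tsum_eq,
    Fintype.card, ← card_erase_of_mem (mem_univ j), ← prod_const]
  refine mul_le_mul_of_nonneg_left (prod_le_prod (fun i _ => ?_) fun i hi => ?_) (exp_pos _).le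
  · exact tsum_nonneg (gibbsMajorant_nonneg hA.le j i)
  · exact tsum_gibbsMajorant_le_of_ne hκ hA (ne_of_mem_erase hi)

theorem summable_prod_mul_gibbsWeight [Nonempty ι] {ν A : ℝ} (hν : ν < 0) (hA : 0 ≤ A) :
    Summable fun k : ι → ℕ => (∏ i, (k i : ℝ)) * gibbsWeight ν A k := by
  refine Summable.of_nonneg_of_le (fun k => mul_nonneg (by positivity) (gibbsWeight_nonneg hA k))
    (prod_mul_gibbsWeight_le hν le_rfl (by simpa using hν.le) hA)
    (Summable.mul_left _ (summable_sum fun j _ => ?_))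
  exact summable_prod_apply_of_nonneg (fun i => gibbsMajorant_nonneg hA j i)
    fun i => summable_gibbsMajorant le_rfl hA j i

theorem tsum_prod_mul_gibbsWeight_le [Nonempty ι] {ν κ A : ℝ} (hν : ν < 0) (hκ : 0 < κ)
    (hκν : 2 * Fintype.card ι * κ ≤ -ν) (hA : 0 < A) :
    ∑' k : ι → ℕ, (∏ i, (k i : ℝ)) * gibbsWeight ν A k
      ≤ 2 / -ν * Fintype.card ι * (exp (exp (-κ) * A) *
          exp (1 + (4 * κ)⁻¹ * log A ^ 2) ^ (Fintype.card ι - 1)) := by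
  have hsummable (j : ι) : Summable fun k : ι → ℕ => ∏ i, gibbsMajorant κ A j i (k i) :=
    summable_prod_apply_of_nonneg (fun i => gibbsMajorant_nonneg hA.le j i)
      fun i => summable_gibbsMajorant hκ.le hA.le j i
  calc ∑' k : ι → ℕ, (∏ i, (k i : ℝ)) * gibbsWeight ν A k
      ≤ ∑' k : ι → ℕ, 2 / -ν * ∑ j, ∏ i, gibbsMajorant κ A j i (k i) :=
        (summable_prod_mul_gibbsWeight hν hA.le).tsum_le_tsum
          (prod_mul_gibbsWeight_le hν hκ.le hκν hA.le)
          ((summable_sum fun j _ => hsummable j).mul_left _)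
    _ = 2 / -ν * ∑ j, ∑' k : ι → ℕ, ∏ i, gibbsMajorant κ A j i (k i) := by
        rw [tsum_mul_left, Summable.tsum_finsetSum fun j _ => hsummable j]
    _ ≤ 2 / -ν * ∑ _j : ι, exp (exp (-κ) * A) *
          exp (1 + (4 * κ)⁻¹ * log A ^ 2) ^ (Fintype.card ι - 1) := by
        refine mul_le_mul_of_nonneg_left (sum_le_sum fun j _ => ?_)
          (div_nonneg zero_le_two (by linarith))
        exact (tsum_prod_apply_le_prod_tsum (fun i => gibbsMajorant_nonneg hA.le j i)
          fun i => summable_gibbsMajorant hκ.le hA.le j i).trans (prod_tsum_gibbsMajorant_le hκ hA j)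
    _ = _ := by rw [sum_const, card_univ, nsmul_eq_mul, mul_assoc]

theorem tendsto_tsum_prod_mul_gibbsWeight_div_tsum [Nontrivial ι] {ν : ℝ} (hν : ν < 0) :
    Tendsto (fun A => (∑' k : ι → ℕ, (∏ i, (k i : ℝ)) * gibbsWeight ν A k) /
      ∑' k : ι → ℕ, gibbsWeight ν A k) atTop (nhds 0) := by
  set κ := -ν / (2 * Fintype.card ι)
  have hκ : 0 < κ := div_pos (by linarith) (by positivity)
  have hκν : 2 * Fintype.card ι * κ ≤ -ν := by
    rw [mul_div_cancel₀ _ (by positivity)]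
  have hbound := (tendsto_exp_mul_mul_exp_log_sq_pow_div_exp (exp_lt_one_iff.2 (neg_lt_zero.2 hκ)) 1
    (4 * κ)⁻¹ (Fintype.card ι - 1)).const_mul (2 / -ν * Fintype.card ι)
  rw [mul_zero] at hbound
  refine squeeze_zero' ?_ ?_ hbound
  · filter_upwards [eventually_ge_atTop 0] with A hA
    exact div_nonneg (tsum_nonneg fun k => mul_nonneg (by positivity) (gibbsWeight_nonneg hA k))
      (tsum_nonneg (gibbsWeight_nonneg hA))
  · filter_upwards [eventually_gt_atTop 0] with A hA
    rw [← mul_div_assoc]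
    have hc : 0 ≤ 2 / -ν := div_nonneg zero_le_two (by linarith)
    exact div_le_div₀ (by positivity) (tsum_prod_mul_gibbsWeight_le hν hκ hκν hA) (exp_pos A)
      (exp_le_tsum_gibbsWeight hν.le hA.le)

end Majorant

end Gibbs

end

/-- Equation (pp): the expectation `E G_d(μ_a^{(d)}) = Σ_k (k₁⋯k_d)·π_a(k)`
converges for every `a > 0` and tends to `0` as `a → ∞`. -/
theorem stmt2 (d : ℕ) (hd : 2 ≤ d) (b ν : ℝ) (hb : 0 < b) (hν : ν < 0)
    (Z : ℝ → ℝ)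
    (hZ : ∀ a, Z a = ∑' k : Fin d → ℕ,
      ((a * b ^ d / d) ^ (∑ i, k i) / ∏ i, (Nat.factorial (k i) : ℝ))
        * Real.exp (ν * ∏ i, (k i : ℝ)))
    (π : ℝ → (Fin d → ℕ) → ℝ)
    (hπ : ∀ a k, π a k
      = ((a * b ^ d / d) ^ (∑ i, k i) / ∏ i, (Nat.factorial (k i) : ℝ))
          * Real.exp (ν * ∏ i, (k i : ℝ)) / Z a) :
    (∀ a > 0, Summable fun k : Fin d → ℕ => (∏ i, (k i : ℝ)) * π a k) ∧
    Tendsto (fun a : ℝ => ∑' k : Fin d → ℕ, (∏ i, (k i : ℝ)) * π a k)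
      atTop (nhds 0) := by
  have : Nontrivial (Fin d) := Fin.nontrivial_iff_two_le.2 hd
  have hmean (a : ℝ) : (fun k : Fin d → ℕ => (∏ i, (k i : ℝ)) * π a k)
      = fun k => (∏ i, (k i : ℝ)) * gibbsWeight ν (a * b ^ d / d) k / Z a := by
    ext k
    rw [hπ, gibbsWeight]
    ring
  have hA : Tendsto (fun a : ℝ => a * b ^ d / d) atTop atTop :=
    (tendsto_id.atTop_mul_const (by positivity)).atTop_div_const (by positivity)
  refine ⟨fun a ha => ?_, ?_⟩
  · rw [hmean]
    exact (summable_prod_mul_gibbsWeight hν (by positivity)).div_const _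
  · refine ((tendsto_tsum_prod_mul_gibbsWeight_div_tsum (ι := Fin d) hν).comp hA).congr fun a => ?_
    rw [hmean, tsum_div_const, hZ]
    rfl
end

section
/- Fix an integer d ≥ 1 and a real b > 0. Let X be a finite set of pairwise distinct facets whose centers lie in [0,b]^d, and assume X is in general position: any two distinct facets of X with the same orientation l have different l-th center coordinates. For i = 1,…,d let θ_i(X) be the number of facets in X with orientation i. Then Σ over d-element subsets {x₁,…,x_d} of X of ℍ⁰(x₁ ∩ ⋯ ∩ x_d) = θ₁(X)·θ₂(X)⋯θ_d(X). -/
/-!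
Let `S` be a `d`-set of facets. If two facets of `S` share an orientation `l`, general position
makes their `l`-th centre coordinates differ, so they are disjoint. Otherwise every orientation
occurs exactly once in `S`; the facet of orientation `i` pins the `i`-th coordinate, so the
intersection is at most one point, and it is exactly one point because all centres lie in
`[0,b]^d`, whence the free coordinates differ by at most `b`. The sum therefore counts the
`d`-sets containing one facet of each orientation, which correspond to the choice functions
`i ↦ (a facet of orientation i)`: there are `θ₁ ⋯ θ_d` of them.
-/

open MeasureTheory

/-- A facet with centre `z ∈ [0,b]^d` and orientation `l` (orientations are
indexed by `Fin d`). -/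
def facet (d : ℕ) (b : ℝ) (z : EuclideanSpace ℝ (Fin d)) (l : Fin d) :
    Set (EuclideanSpace ℝ (Fin d)) :=
  {x | x l = z l ∧ ∀ i, i ≠ l → |x i - z i| ≤ b}

namespace Finset

variable {α ι : Type*} [Fintype ι]

theorem bijOn_snd_of_injOn_of_card_eq {S : Finset (α × ι)}
    (hinj : Set.InjOn Prod.snd (S : Set (α × ι))) (hcard : #S = Fintype.card ι) :
    Set.BijOn Prod.snd (S : Set (α × ι)) Set.univ := by
  refine ⟨Set.mapsTo_univ _ _, hinj, ?_⟩
  simpa using surjOn_of_injOn_of_card_le (t := univ) Prod.snd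
    (fun _ _ => mem_coe.2 (mem_univ _)) hinj hcard.ge

variable [DecidableEq α] [DecidableEq ι]

theorem card_filter_injOn_snd_powersetCard (X : Finset (α × ι)) :
    #((X.powersetCard (Fintype.card ι)).filter
        fun S : Finset (α × ι) => Set.InjOn Prod.snd (S : Set (α × ι)))
      = ∏ i, #{p ∈ X | p.2 = i} := by
  rw [← Fintype.card_piFinset]
  symm
  refine card_bij (fun f _ => univ.image f) ?_ ?_ ?_
  · intro f hf
    simp only [Fintype.mem_piFinset, mem_filter] at hf
    have hinj : Function.Injective f := fun i j h => by
      rw [← (hf i).2, ← (hf j).2, h]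
    simp only [mem_filter, mem_powersetCard, image_subset_iff, mem_univ, forall_const,
      card_image_of_injective _ hinj, card_univ, and_true]
    refine ⟨fun i => (hf i).1, ?_⟩
    intro p hp q hq h
    obtain ⟨i, -, rfl⟩ := mem_image.1 hp
    obtain ⟨j, -, rfl⟩ := mem_image.1 hq
    rw [(hf i).2, (hf j).2] at h
    rw [h]
  · intro f hf g hg h
    simp only [Fintype.mem_piFinset, mem_filter] at hf hg
    funext i
    obtain ⟨j, -, hj⟩ := mem_image.1 (h ▸ mem_image_of_mem f (mem_univ i))
    rw [← hj, ← (hf i).2, ← hj, (hg j).2]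
  · intro S hS
    simp only [mem_filter, mem_powersetCard] at hS
    obtain ⟨⟨hSX, hcard⟩, hinj⟩ := hS
    choose f hfS hf using fun i =>
      (bijOn_snd_of_injOn_of_card_eq hinj hcard).surjOn (Set.mem_univ i)
    refine ⟨f, ?_, ?_⟩
    · simp only [Fintype.mem_piFinset, mem_filter]
      exact fun i => ⟨hSX (hfS i), hf i⟩
    · refine eq_of_subset_of_card_le (image_subset_iff.2 fun i _ => hfS i) ?_
      rw [card_image_of_injective, card_univ, hcard]
      intro i j h
      rw [← hf i, ← hf j, h]

end Finset

section Facets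

variable {d : ℕ} {b : ℝ}

theorem iInter_facet_eq_empty {S : Finset (EuclideanSpace ℝ (Fin d) × Fin d)} {p q}
    (hp : p ∈ S) (hq : q ∈ S) (horient : p.2 = q.2) (hne : p.1 p.2 ≠ q.1 q.2) :
    ⋂ r ∈ S, facet d b r.1 r.2 = ∅ := by
  refine Set.eq_empty_of_forall_notMem fun y hy => hne ?_
  rw [Set.mem_iInter₂] at hy
  rw [← (hy p hp).1, ← (hy q hq).1, horient]

theorem iInter_facet_subsingleton {S : Finset (EuclideanSpace ℝ (Fin d) × Fin d)}
    (hS : Set.SurjOn Prod.snd (S : Set (EuclideanSpace ℝ (Fin d) × Fin d)) Set.univ) :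
    (⋂ p ∈ S, facet d b p.1 p.2).Subsingleton := by
  intro y hy y' hy'
  rw [Set.mem_iInter₂] at hy hy'
  ext i
  obtain ⟨p, hp, rfl⟩ := hS (Set.mem_univ i)
  rw [(hy p hp).1, (hy' p hp).1]

theorem iInter_facet_nonempty {S : Finset (EuclideanSpace ℝ (Fin d) × Fin d)}
    (hS : Set.BijOn Prod.snd (S : Set (EuclideanSpace ℝ (Fin d) × Fin d)) Set.univ)
    (hcen : ∀ p ∈ S, ∀ i, p.1 i ∈ Set.Icc 0 b) : (⋂ p ∈ S, facet d b p.1 p.2).Nonempty := by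
  choose g hgS hg using fun i => hS.surjOn (Set.mem_univ i)
  refine ⟨WithLp.toLp 2 fun i => (g i).1 i, Set.mem_iInter₂.2 fun p hp => ⟨?_, fun i _ => ?_⟩⟩
  · have : g p.2 = p := hS.injOn (hgS p.2) hp (hg p.2)
    simp [this]
  · simpa [← Real.dist_eq] using Real.dist_le_of_mem_Icc (hcen _ (hgS i) i) (hcen p hp i)

theorem hausdorffMeasure_zero_iInter_facet_of_bijOn
    {S : Finset (EuclideanSpace ℝ (Fin d) × Fin d)}
    (hS : Set.BijOn Prod.snd (S : Set (EuclideanSpace ℝ (Fin d) × Fin d)) Set.univ)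
    (hcen : ∀ p ∈ S, ∀ i, p.1 i ∈ Set.Icc 0 b) : μH[0] (⋂ p ∈ S, facet d b p.1 p.2) = 1 := by
  obtain ⟨x, hx⟩ := iInter_facet_nonempty hS hcen
  rw [(iInter_facet_subsingleton hS.surjOn).eq_singleton_of_mem hx,
    Measure.hausdorffMeasure_zero_singleton]

open Classical in
theorem hausdorffMeasure_zero_iInter_facet {S : Finset (EuclideanSpace ℝ (Fin d) × Fin d)}
    (hcard : S.card = d) (hcen : ∀ p ∈ S, ∀ i, p.1 i ∈ Set.Icc 0 b)
    (hgen : ∀ p ∈ S, ∀ q ∈ S, p ≠ q → p.2 = q.2 → p.1 p.2 ≠ q.1 q.2) :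
    μH[0] (⋂ p ∈ S, facet d b p.1 p.2)
      = if Set.InjOn Prod.snd (S : Set (EuclideanSpace ℝ (Fin d) × Fin d)) then 1 else 0 := by
  split_ifs with hinj
  · exact hausdorffMeasure_zero_iInter_facet_of_bijOn
      (Finset.bijOn_snd_of_injOn_of_card_eq hinj (by rw [hcard, Fintype.card_fin])) hcen
  · obtain ⟨p, hp, q, hq, horient, hpq⟩ : ∃ p ∈ S, ∃ q ∈ S, p.2 = q.2 ∧ p ≠ q := by
      simpa [Set.InjOn] using hinj
    rw [iInter_facet_eq_empty hp hq horient (hgen p hp q hq hpq horient), measure_empty]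

end Facets

theorem stmt3_general (d : ℕ) (b : ℝ)
    (X : Finset ((EuclideanSpace ℝ (Fin d)) × Fin d))
    (hcen : ∀ p ∈ X, ∀ i, p.1 i ∈ Set.Icc (0 : ℝ) b)
    (hgen : ∀ p ∈ X, ∀ q ∈ X, p ≠ q → p.2 = q.2 → p.1 p.2 ≠ q.1 q.2) :
    ∑ S ∈ X.powersetCard d, μH[0] (⋂ p ∈ S, facet d b p.1 p.2)
      = ∏ i : Fin d, ((X.filter fun p => p.2 = i).card : ENNReal) := by
  classical
  have hterm : ∀ S ∈ X.powersetCard d, μH[0] (⋂ p ∈ S, facet d b p.1 p.2)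
      = if Set.InjOn Prod.snd (S : Set (EuclideanSpace ℝ (Fin d) × Fin d)) then 1 else 0 := by
    intro S hS
    obtain ⟨hSX, hcard⟩ := Finset.mem_powersetCard.1 hS
    exact hausdorffMeasure_zero_iInter_facet hcard (fun p hp => hcen p (hSX hp))
      (fun p hp q hq => hgen p (hSX hp) q (hSX hq))
  rw [Finset.sum_congr rfl hterm, Finset.sum_boole]
  have hcount := Finset.card_filter_injOn_snd_powersetCard X
  rw [Fintype.card_fin] at hcount
  exact_mod_cast hcount

/-- Equation (kack): the `U`-statistic `G_d` equals the product of the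
orientation counts. -/
theorem stmt3 (d : ℕ) (hd : 1 ≤ d) (b : ℝ) (hb : 0 < b)
    (X : Finset ((EuclideanSpace ℝ (Fin d)) × Fin d))
    (hcen : ∀ p ∈ X, ∀ i, p.1 i ∈ Set.Icc (0 : ℝ) b)
    (hgen : ∀ p ∈ X, ∀ q ∈ X, p ≠ q → p.2 = q.2 → p.1 p.2 ≠ q.1 q.2) :
    ∑ S ∈ X.powersetCard d, μH[0] (⋂ p ∈ S, facet d b p.1 p.2)
      = ∏ i : Fin d, ((X.filter fun p => p.2 = i).card : ENNReal) :=
  stmt3_general d b X hcen hgen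
end

section
/- Fix an integer d ≥ 1 and a real b > 0. Let y₁,…,y_d be facets with centers in [0,b]^d whose orientations are pairwise distinct (hence realizing all d orientations). Then the intersection y₁ ∩ ⋯ ∩ y_d is a singleton; consequently ℍ⁰(y₁ ∩ ⋯ ∩ y_d) = 1. -/
/-!
If the orientations `l j` are pairwise distinct they form a permutation `e` of the coordinates,
so the conditions `x (e j) = z j (e j)` pin down every coordinate of a common point `x`:
`x i = z (e⁻¹ i) i`. This point does lie on every facet, since two coordinates in `[0, b]`
differ by at most `b`.
-/

open MeasureTheory

section FacetIntersection

variable {d : ℕ} {b : ℝ} (z : Fin d → EuclideanSpace ℝ (Fin d)) (e : Fin d ≃ Fin d)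

lemma eq_of_mem_iInter_facet {y : EuclideanSpace ℝ (Fin d)}
    (hy : y ∈ ⋂ j, facet d b (z j) (e j)) :
    y = WithLp.toLp 2 fun i => z (e.symm i) i := by
  ext i
  have hyi := (Set.mem_iInter.1 hy (e.symm i)).1
  rwa [e.apply_symm_apply] at hyi

lemma mem_iInter_facet (hcen : ∀ j i, z j i ∈ Set.Icc (0 : ℝ) b) :
    (WithLp.toLp 2 fun i => z (e.symm i) i) ∈ ⋂ j, facet d b (z j) (e j) := by
  refine Set.mem_iInter.2 fun j => ⟨by simp, fun i _ => ?_⟩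
  obtain ⟨h₀, h₁⟩ := hcen (e.symm i) i
  obtain ⟨h₀', h₁'⟩ := hcen j i
  exact abs_sub_le_of_nonneg_of_le h₀ h₁ h₀' h₁'

theorem iInter_facet_eq_singleton (hcen : ∀ j i, z j i ∈ Set.Icc (0 : ℝ) b) :
    ⋂ j, facet d b (z j) (e j) = {WithLp.toLp 2 fun i => z (e.symm i) i} :=
  Set.eq_singleton_iff_unique_mem.2
    ⟨mem_iInter_facet z e hcen, fun _ hy => eq_of_mem_iInter_facet z e hy⟩

end FacetIntersection

theorem stmt5_general (d : ℕ) (b : ℝ)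
    (z : Fin d → EuclideanSpace ℝ (Fin d)) (l : Fin d → Fin d)
    (hcen : ∀ j i, z j i ∈ Set.Icc (0 : ℝ) b)
    (hinj : Function.Injective l) :
    (∃ x, ⋂ j, facet d b (z j) (l j) = {x}) ∧
    μH[0] (⋂ j, facet d b (z j) (l j)) = 1 := by
  let e := Equiv.ofBijective l hinj.bijective_of_finite
  have hmeet : ⋂ j, facet d b (z j) (l j) = {WithLp.toLp 2 fun i => z (e.symm i) i} :=
    iInter_facet_eq_singleton z e hcen
  rw [hmeet]
  exact ⟨⟨_, rfl⟩, Measure.hausdorffMeasure_zero_singleton _⟩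

/-- The case `c = d` of the bound (bnds): `d` facets with pairwise distinct
orientations intersect in a single point, so `ℍ⁰` of the intersection is `1`. -/
theorem stmt5 (d : ℕ) (hd : 1 ≤ d) (b : ℝ) (hb : 0 < b)
    (z : Fin d → EuclideanSpace ℝ (Fin d)) (l : Fin d → Fin d)
    (hcen : ∀ j i, z j i ∈ Set.Icc (0 : ℝ) b)
    (hinj : Function.Injective l) :
    (∃ x, ⋂ j, facet d b (z j) (l j) = {x}) ∧
    μH[0] (⋂ j, facet d b (z j) (l j)) = 1 :=
  stmt5_general d b z l hcen hinj
end

section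
/- Fix integers d ≥ 2, 2 ≤ c ≤ d and m ≥ 1, and reals b > 0, R > 0, S > 0 and a > 0. Let Y = [0,b]^d × {1,…,d} and let λ be the measure on Y given by λ(dz,{i}) = (1/d)·dz (Lebesgue measure on [0,b]^d times the uniform weight 1/d on each orientation). Let g : Y^m → [0,∞) be λ^m-integrable and invariant under the diagonal action of the symmetric group S_d on Y^m, where a permutation σ acts on a point (z,i) ∈ Y by permuting the coordinates of the center z according to σ and replacing the orientation i by σ(i). Let ρ : Y^m → ℝ be measurable and suppose that for every u = (u₁,…,u_m) ∈ Y^m, |ρ(u) − C(d−k(u), d−c+1)/C(d, d−c+1)| < R·e^{−S·a}, where k(u) ∈ {1,…,d} is the number of distinct orientations appearing among u₁,…,u_m and C(n,k) is the binomial coefficient (0 when k > n). Then |∫_{Y^m} g·ρ dλ^m − ∫_{(Y_{c−1})^m} g dλ^m| ≤ R·(∫_{Y^m} g dλ^m)·e^{−S·a}, where Y_{c−1} = [0,b]^d × {1,…,c−1} ⊆ Y. -/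
open MeasureTheory

/-- The measure `λ` on the facet space `Y = [0,b]^d × {1,…,d}` given by
`λ(dz,{i}) = (1/d)·dz`, with orientations indexed by `Fin d`. -/
noncomputable def facetSpaceMeasure (d : ℕ) (b : ℝ) : Measure ((Fin d → ℝ) × Fin d) :=
  ((volume : Measure (Fin d → ℝ)).restrict {z | ∀ i, z i ∈ Set.Icc (0 : ℝ) b}).prod
    ((d : ENNReal)⁻¹ • Measure.count)

/-- The product measure `λ^m` on `Y^m`. -/
noncomputable def facetSpaceMeasurePi (d : ℕ) (b : ℝ) (m : ℕ) :
    Measure (Fin m → (Fin d → ℝ) × Fin d) :=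
  Measure.pi fun _ => facetSpaceMeasure d b

/-!
If the orientations of `u` form a set `K` with `#K = k`, the number of permutations `σ` with
`σ K ⊆ T` is `d! · C(d - k, d - #T) / C(d, d - #T)`: it depends only on `k`, and summing it over
all `k`-subsets `K` counts each `σ` once for every `k`-subset of `σ⁻¹ T`.
Since `λ^m` and `g` are invariant under the diagonal action, `∫ g · 1[σ K(u) ⊆ T]` equals
`∫_{K(u) ⊆ T} g` for every `σ`; summing over `σ` gives
`∫ g · C(d - k(u), d - #T) / C(d, d - #T) = ∫_{K(u) ⊆ T} g`.
For `T = {i | i < c - 1}` (the orientations `1, …, c - 1` of the paper, shifted into `Fin d`),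
the hypothesis on `ρ` bounds the difference by `R e^{-S a} ∫ g`.
-/

open Finset Equiv

theorem Nat.choose_mul_choose_sub_eq {n t k : ℕ} (hk : k ≤ n) (ht : t ≤ n) :
    t.choose k * n.choose (n - t) = n.choose k * (n - k).choose (n - t) := by
  rcases le_or_gt k t with hkt | htk
  · rw [Nat.choose_symm ht, mul_comm, Nat.choose_mul hkt,
      ← Nat.choose_symm (show t - k ≤ n - k by omega), show n - k - (t - k) = n - t by omega]
  · rw [Nat.choose_eq_zero_of_lt htk, Nat.choose_eq_zero_of_lt (show n - k < n - t by omega),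
      zero_mul, mul_zero]

namespace Finset

variable {α : Type*} [Fintype α] [DecidableEq α]

def permsMapsInto (K T : Finset α) : Finset (Perm α) := {σ | K.image σ ⊆ T}

theorem exists_perm_image_eq {K K' : Finset α} (h : #K' = #K) :
    ∃ π : Perm α, K'.image π = K := by
  obtain ⟨e⟩ : Nonempty (K' ≃ K) := by rw [← Fintype.card_eq]; simpa using h
  refine ⟨e.extendSubtype, eq_of_subset_of_card_le ?_ ?_⟩
  · exact image_subset_iff.2 fun x hx => e.extendSubtype_mem x hx
  · rw [card_image_of_injective _ (Equiv.injective _), h]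

theorem card_permsMapsInto_congr (T : Finset α) {K K' : Finset α} (h : #K' = #K) :
    #(permsMapsInto K' T) = #(permsMapsInto K T) := by
  obtain ⟨π, rfl⟩ := exists_perm_image_eq h
  refine card_equiv (Equiv.mulRight π⁻¹) fun σ => ?_
  simp [permsMapsInto, image_image, Function.comp_def]

theorem sum_card_permsMapsInto_powersetCard (T : Finset α) (k : ℕ) :
    ∑ K ∈ powersetCard k univ, #(permsMapsInto K T)
      = (Fintype.card α).factorial * (#T).choose k := by
  have hfiber (σ : Perm α) :
      #{K ∈ powersetCard k (univ : Finset α) | K.image σ ⊆ T} = (#T).choose k := by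
    have : {K ∈ powersetCard k (univ : Finset α) | K.image σ ⊆ T}
        = powersetCard k (T.image σ.symm) := by
      ext K
      simp [mem_powersetCard, subset_iff, Equiv.symm_apply_eq, and_comm]
    rw [this, card_powersetCard, card_image_of_injective _ σ.symm.injective]
  simp only [permsMapsInto, card_filter]
  rw [sum_comm]
  simp only [← card_filter, hfiber, sum_const, card_univ, Fintype.card_perm, smul_eq_mul]

theorem card_permsMapsInto_mul_choose (K T : Finset α) :
    #(permsMapsInto K T) * (Fintype.card α).choose (Fintype.card α - #T)
      = (Fintype.card α - #K).choose (Fintype.card α - #T) * (Fintype.card α).factorial := by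
  set n := Fintype.card α
  have hK : #K ≤ n := card_le_univ K
  have hT : #T ≤ n := card_le_univ T
  have hsum : n.choose #K * #(permsMapsInto K T) = n.factorial * (#T).choose #K := by
    rw [← sum_card_permsMapsInto_powersetCard,
      sum_congr rfl fun K' hK' => card_permsMapsInto_congr T (mem_powersetCard.1 hK').2,
      sum_const, card_powersetCard, card_univ, smul_eq_mul]
  apply Nat.eq_of_mul_eq_mul_left (Nat.choose_pos hK)
  calc n.choose #K * (#(permsMapsInto K T) * n.choose (n - #T))
      = n.factorial * ((#T).choose #K * n.choose (n - #T)) := by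
        rw [← mul_assoc, hsum, mul_assoc]
    _ = n.choose #K * ((n - #K).choose (n - #T) * n.factorial) := by
      rw [Nat.choose_mul_choose_sub_eq hK hT]; ring

theorem card_permsMapsInto_eq (K T : Finset α) :
    (#(permsMapsInto K T) : ℝ) = (Fintype.card α).factorial *
      ((Fintype.card α - #K).choose (Fintype.card α - #T)
        / (Fintype.card α).choose (Fintype.card α - #T) : ℝ) := by
  have hpos : (0 : ℝ) < (Fintype.card α).choose (Fintype.card α - #T) := by
    exact_mod_cast Nat.choose_pos (Nat.sub_le _ _)
  rw [mul_div_assoc', eq_div_iff hpos.ne', mul_comm ((Fintype.card α).factorial : ℝ)]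
  exact_mod_cast card_permsMapsInto_mul_choose K T

end Finset

namespace FacetSpace

variable {d m : ℕ}

def orientations (u : Fin m → (Fin d → ℝ) × Fin d) : Finset (Fin d) :=
  univ.image fun j => (u j).2

def permAct (σ : Perm (Fin d)) (u : Fin m → (Fin d → ℝ) × Fin d) :
    Fin m → (Fin d → ℝ) × Fin d :=
  fun j => (fun i => (u j).1 (σ.symm i), σ (u j).2)

theorem orientations_permAct (σ : Perm (Fin d)) (u : Fin m → (Fin d → ℝ) × Fin d) :
    orientations (permAct σ u) = (orientations u).image σ := by
  simp only [orientations, permAct, image_image, Function.comp_def]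

theorem measurable_comp_orientations {β : Type*} [MeasurableSpace β] (F : Finset (Fin d) → β) :
    Measurable fun u : Fin m → (Fin d → ℝ) × Fin d => F (orientations u) :=
  (measurable_of_countable fun v : Fin m → Fin d => F (univ.image v)).comp
    (measurable_pi_lambda _ fun j => (measurable_pi_apply j).snd)

instance isFiniteMeasure_facetSpaceMeasure (d : ℕ) (b : ℝ) :
    IsFiniteMeasure (facetSpaceMeasure d b) := by
  have : IsFiniteMeasure ((volume : Measure (Fin d → ℝ)).restrict
      {z | ∀ i, z i ∈ Set.Icc (0 : ℝ) b}) :=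
    isFiniteMeasure_restrict.2 (by
      simpa [Set.pi, ← Set.Icc_def] using
        (isCompact_univ_pi fun _ => isCompact_Icc).measure_lt_top.ne)
  have : IsFiniteMeasure ((d : ENNReal)⁻¹ • (Measure.count : Measure (Fin d))) := by
    constructor
    rcases Nat.eq_zero_or_pos d with rfl | hd
    · simp
    · simp [ENNReal.inv_mul_cancel (by exact_mod_cast hd.ne') (ENNReal.natCast_ne_top d)]
  unfold facetSpaceMeasure
  infer_instance

theorem measurePreserving_facetPerm (b : ℝ) (σ : Perm (Fin d)) :
    MeasurePreserving (fun y : (Fin d → ℝ) × Fin d => (fun i => y.1 (σ.symm i), σ y.2))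
      (facetSpaceMeasure d b) (facetSpaceMeasure d b) := by
  have hcube : MeasurePreserving (fun z : Fin d → ℝ => fun i => z (σ.symm i))
      ((volume : Measure (Fin d → ℝ)).restrict {z | ∀ i, z i ∈ Set.Icc (0 : ℝ) b})
      ((volume : Measure (Fin d → ℝ)).restrict {z | ∀ i, z i ∈ Set.Icc (0 : ℝ) b}) := by
    have hvol := volume_measurePreserving_piCongrLeft (fun _ : Fin d => ℝ) σ
    have hcoe : ⇑(MeasurableEquiv.piCongrLeft (fun _ : Fin d => ℝ) σ)
        = fun z : Fin d → ℝ => fun i => z (σ.symm i) := by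
      ext z i
      simpa using
        MeasurableEquiv.piCongrLeft_apply_apply (β := fun _ : Fin d => ℝ) σ z (σ.symm i)
    rw [hcoe] at hvol
    convert hvol.restrict_preimage (s := {z | ∀ i, z i ∈ Set.Icc (0 : ℝ) b})
      (by measurability) using 2
    ext z
    simp only [Set.mem_ofPred_eq, Set.mem_preimage]
    exact σ.symm.forall_congr_right.symm
  have hcount : Measure.map σ (Measure.count : Measure (Fin d)) = Measure.count :=
    Measure.ext_of_singleton fun x => by
      rw [Measure.map_apply (measurable_of_countable _) (measurableSet_singleton x),
        show ⇑σ ⁻¹' {x} = {σ.symm x} by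
          rw [Equiv.preimage_eq_iff_eq_image, Set.image_singleton, σ.apply_symm_apply],
        Measure.count_singleton, Measure.count_singleton]
  exact hcube.prod ⟨measurable_of_countable _, by rw [Measure.map_smul, hcount]⟩

theorem measurePreserving_permAct (b : ℝ) (σ : Perm (Fin d)) :
    MeasurePreserving (permAct σ) (facetSpaceMeasurePi d b m) (facetSpaceMeasurePi d b m) :=
  measurePreserving_pi _ _ fun _ => measurePreserving_facetPerm b σ

variable {b : ℝ} {g : (Fin m → (Fin d → ℝ) × Fin d) → ℝ}

theorem integral_card_permsMapsInto_mul (hgint : Integrable g (facetSpaceMeasurePi d b m))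
    (hsym : ∀ σ u, g (permAct σ u) = g u) (T : Finset (Fin d)) :
    ∫ u, (#(permsMapsInto (orientations u) T) : ℝ) * g u ∂(facetSpaceMeasurePi d b m)
      = d.factorial * ∫ u in {u | orientations u ⊆ T}, g u ∂(facetSpaceMeasurePi d b m) := by
  set μ := facetSpaceMeasurePi d b m
  set A := {u : Fin m → (Fin d → ℝ) × Fin d | orientations u ⊆ T}
  have hA : MeasurableSet A := measurableSet_setOfPred.2 (measurable_comp_orientations (· ⊆ T))
  have hmp (σ : Perm (Fin d)) := measurePreserving_permAct (m := m) b σ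
  have hsum u : (#(permsMapsInto (orientations u) T) : ℝ) * g u
      = ∑ σ, A.indicator g (permAct σ u) := by
    rw [permsMapsInto, natCast_card_filter, sum_mul]
    refine sum_congr rfl fun σ _ => ?_
    simp only [Set.indicator_apply, A, Set.mem_ofPred_eq, orientations_permAct, hsym]
    split_ifs <;> simp
  have hint (σ : Perm (Fin d)) : Integrable (fun u => A.indicator g (permAct σ u)) μ :=
    (hmp σ).integrable_comp_of_integrable (hgint.indicator hA)
  have hterm σ : ∫ u, A.indicator g (permAct σ u) ∂μ = ∫ u in A, g u ∂μ := by
    rw [← integral_indicator hA, ← integral_map (hmp σ).measurable.aemeasurable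
      ((hmp σ).map_eq ▸ (hgint.indicator hA).aestronglyMeasurable), (hmp σ).map_eq]
  rw [integral_congr_ae (.of_forall hsum),
    integral_finsetSum _ fun σ _ => hint σ,
    sum_congr rfl fun σ _ => hterm σ, sum_const, card_univ, Fintype.card_perm, Fintype.card_fin,
    nsmul_eq_mul]

theorem integral_mul_choose_div_choose (hgint : Integrable g (facetSpaceMeasurePi d b m))
    (hsym : ∀ σ u, g (permAct σ u) = g u) (T : Finset (Fin d)) :
    ∫ u, g u * ((d - #(orientations u)).choose (d - #T) / d.choose (d - #T) : ℝ)
        ∂(facetSpaceMeasurePi d b m)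
      = ∫ u in {u | orientations u ⊆ T}, g u ∂(facetSpaceMeasurePi d b m) := by
  have hfac : (d.factorial : ℝ) ≠ 0 := by positivity
  rw [← mul_right_inj' hfac, ← integral_card_permsMapsInto_mul hgint hsym T,
    ← integral_const_mul]
  refine integral_congr_ae (.of_forall fun u => ?_)
  simp only [card_permsMapsInto_eq, Fintype.card_fin]
  ring

end FacetSpace

theorem abs_integral_mul_sub_integral_mul_le {α : Type*} [MeasurableSpace α] {μ : Measure α}
    {g f h : α → ℝ} {C ε : ℝ} (hg : Integrable g μ) (hg0 : ∀ x, 0 ≤ g x)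
    (hf : AEStronglyMeasurable f μ) (hh : AEStronglyMeasurable h μ) (hC : ∀ x, |h x| ≤ C)
    (hfh : ∀ x, |f x - h x| ≤ ε) :
    |∫ x, g x * f x ∂μ - ∫ x, g x * h x ∂μ| ≤ ε * ∫ x, g x ∂μ := by
  have hgh : Integrable (fun x => g x * h x) μ := hg.mul_bdd hh (.of_forall hC)
  have hgfh : Integrable (fun x => g x * (f x - h x)) μ :=
    hg.mul_bdd (hf.sub hh) (.of_forall hfh)
  have hgf : Integrable (fun x => g x * f x) μ :=
    (hgfh.add hgh).congr (.of_forall fun x => by simp only [Pi.add_apply]; ring)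
  calc |∫ x, g x * f x ∂μ - ∫ x, g x * h x ∂μ|
        = ‖∫ x, g x * (f x - h x) ∂μ‖ := by
          simp only [mul_sub, integral_sub hgf hgh, Real.norm_eq_abs]
    _ ≤ ∫ x, ε * g x ∂μ :=
        norm_integral_le_of_norm_le (hg.const_mul ε) (.of_forall fun x => by
          rw [norm_mul, Real.norm_of_nonneg (hg0 x), mul_comm]
          exact mul_le_mul_of_nonneg_right (hfh x) (hg0 x))
    _ = ε * ∫ x, g x ∂μ := integral_const_mul ε g

theorem stmt10_general (d c m : ℕ) (hc2 : 2 ≤ c) (hcd : c ≤ d)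
    (b R S a : ℝ)
    (g : (Fin m → (Fin d → ℝ) × Fin d) → ℝ)
    (hg0 : ∀ u, 0 ≤ g u)
    (hgint : Integrable g (facetSpaceMeasurePi d b m))
    (hsym : ∀ σ : Equiv.Perm (Fin d), ∀ u,
      g (fun j => (fun i => (u j).1 (σ.symm i), σ (u j).2)) = g u)
    (ρ : (Fin m → (Fin d → ℝ) × Fin d) → ℝ) (hρmeas : Measurable ρ)
    (hρ : ∀ u : Fin m → (Fin d → ℝ) × Fin d,
      |ρ u - (Nat.choose (d - (Finset.univ.image fun j => (u j).2).card) (d - c + 1) : ℝ)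
          / (Nat.choose d (d - c + 1) : ℝ)|
        < R * Real.exp (-S * a)) :
    |(∫ u, g u * ρ u ∂(facetSpaceMeasurePi d b m))
        - ∫ u in {u | ∀ j, ((u j).2 : ℕ) < c - 1}, g u ∂(facetSpaceMeasurePi d b m)|
      ≤ R * (∫ u, g u ∂(facetSpaceMeasurePi d b m)) * Real.exp (-S * a) := by
  open FacetSpace in
  set T : Finset (Fin d) := {i | (i : ℕ) < c - 1}
  have hdT : d - #T = d - c + 1 := by rw [Fin.card_filter_val_lt]; omega
  have hA : {u : Fin m → (Fin d → ℝ) × Fin d | ∀ j, ((u j).2 : ℕ) < c - 1}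
      = {u | orientations u ⊆ T} := by
    ext u
    simp [orientations, T, image_subset_iff]
  have hratio := integral_mul_choose_div_choose hgint hsym T
  rw [hdT, ← hA] at hratio
  rw [← hratio, mul_right_comm]
  refine abs_integral_mul_sub_integral_mul_le (C := 1) hgint hg0 hρmeas.aestronglyMeasurable
    (measurable_comp_orientations fun K =>
      ((d - #K).choose (d - c + 1) / d.choose (d - c + 1) : ℝ)).aestronglyMeasurable
    (fun u => ?_) (fun u => (hρ u).le)
  rw [abs_of_nonneg (by positivity)]
  exact div_le_one_of_le₀ (by exact_mod_cast Nat.choose_le_choose _ (Nat.sub_le _ _))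
    (by positivity)

/-- **Lemma 2** of the paper, for a general symmetric nonnegative integrand `g`
and a general `ρ` satisfying the conclusion of Lemma 1. -/
theorem stmt10 (d c m : ℕ) (hd : 2 ≤ d) (hc2 : 2 ≤ c) (hcd : c ≤ d) (hm : 1 ≤ m)
    (b R S a : ℝ) (hb : 0 < b) (hR : 0 < R) (hS : 0 < S) (ha : 0 < a)
    (g : (Fin m → (Fin d → ℝ) × Fin d) → ℝ)
    (hg0 : ∀ u, 0 ≤ g u)
    (hgint : Integrable g (facetSpaceMeasurePi d b m))
    (hsym : ∀ σ : Equiv.Perm (Fin d), ∀ u,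
      g (fun j => (fun i => (u j).1 (σ.symm i), σ (u j).2)) = g u)
    (ρ : (Fin m → (Fin d → ℝ) × Fin d) → ℝ) (hρmeas : Measurable ρ)
    (hρ : ∀ u : Fin m → (Fin d → ℝ) × Fin d,
      |ρ u - (Nat.choose (d - (Finset.univ.image fun j => (u j).2).card) (d - c + 1) : ℝ)
          / (Nat.choose d (d - c + 1) : ℝ)|
        < R * Real.exp (-S * a)) :
    |(∫ u, g u * ρ u ∂(facetSpaceMeasurePi d b m))
        - ∫ u in {u | ∀ j, ((u j).2 : ℕ) < c - 1}, g u ∂(facetSpaceMeasurePi d b m)|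
      ≤ R * (∫ u, g u ∂(facetSpaceMeasurePi d b m)) * Real.exp (-S * a) :=
  stmt10_general d c m hc2 hcd b R S a g hg0 hgint hsym ρ hρmeas hρ
end
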